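/- Let p be a prime, m ≥ 1, s ≥ 2, η a positive integer coprime to p, 0 ≤ ℓ ≤ s − 1, and let λ_0 be a nonzero element of F_{p^m}. Then the code C_{p^{s−ℓ−1}}(η, p^s, λ_0) is a linear code over F_{p^m} of length η p^s, dimension η(p^s − p^{s−ℓ−1}), minimum distance 2, and minimum locality p^{ℓ+1} − 1; in particular it is an optimal LRC, i.e., 2 = η p^s − η(p^s − p^{s−ℓ−1}) − ⌈η(p^s − p^{s−ℓ−1})/(p^{ℓ+1} − 1)⌉ + 2. -/

import Mathlib

open Polynomial

variable {F : Type} [Field F] [Fintype F] [DecidableEq F]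

/-- `d` is the minimum distance (minimum Hamming weight of a nonzero codeword) of `Cset`. -/
def minDistIs {n : ℕ} (Cset : Set (Fin n → F)) (d : ℕ) : Prop :=
  IsLeast {w : ℕ | ∃ c ∈ Cset, c ≠ 0 ∧ hammingNorm c = w} d

/-- The `i`-th code symbol of `Cset` has locality `r`. -/
def symbolLocality {n : ℕ} (Cset : Set (Fin n → F)) (i : Fin n) (r : ℕ) : Prop :=
  ∃ I : Finset (Fin n), i ∉ I ∧ I.card ≤ r ∧
    ∃ f : ({x : Fin n // x ∈ I} → F) → F, ∀ c ∈ Cset, c i = f (fun j => c j.1)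

/-- `Cset` has all-symbol locality `r`. -/
def hasAllSymbolLocality {n : ℕ} (Cset : Set (Fin n → F)) (r : ℕ) : Prop :=
  ∀ i : Fin n, symbolLocality Cset i r

/-- `r` is the minimum locality of `Cset`. -/
def minLocalityIs {n : ℕ} (Cset : Set (Fin n → F)) (r : ℕ) : Prop :=
  IsLeast {r' : ℕ | hasAllSymbolLocality Cset r'} r

/-- The λ-constacyclic code of length `n` corresponding to the ideal generated by (the image of)
`g` in `F[x]/⟨x^n − λ⟩`, viewed as a set of vectors via the coefficient identification. -/
def codeOfGen (n : ℕ) (lam : F) (g : F[X]) : Set (Fin n → F) :=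
  {c | (∑ j : Fin n, Polynomial.C (c j) * X ^ (j : ℕ)) ∈ Ideal.span {g, X ^ n - Polynomial.C lam}}

/-- The code `C_i(η, p^s, λ₀)`: the λ-constacyclic code of length `η p^s`
generated by `(x^η − λ₀)^i`, where `λ = λ₀^{p^s}`. -/
def Ci (p η s i : ℕ) (lam0 : F) : Set (Fin (η * p ^ s) → F) :=
  codeOfGen (η * p ^ s) (lam0 ^ p ^ s) ((X ^ η - Polynomial.C lam0) ^ i)

/-- The code `C_{i,j}(2p^s, λ₀)` with `λ₀ = δ²`: the λ-constacyclic code of length `2 p^s`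
generated by `(x − δ)^i (x + δ)^j`, where `λ = λ₀^{p^s}`. -/
def Cij (p s i j : ℕ) (δ : F) : Set (Fin (2 * p ^ s) → F) :=
  codeOfGen (2 * p ^ s) ((δ ^ 2) ^ p ^ s) ((X - Polynomial.C δ) ^ i * (X + Polynomial.C δ) ^ j)

/-- `V_t = Π_j (t_j + 1)` over the base-`p` digits `t_j` of `t`. -/
def Vdig (p t : ℕ) : ℕ := ((Nat.digits p t).map (· + 1)).prod

/-- Ceiling division `⌈a / b⌉` of natural numbers. -/
def nceil (a b : ℕ) : ℕ := (a + b - 1) / b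

/-- `Cset` is an optimal LRC: for its dimension `k`, minimum distance `d` and minimum
locality `r`, the Singleton-like bound `d = n − k − ⌈k/r⌉ + 2` is met with equality. -/
def optimalLRC {n : ℕ} (Cset : Set (Fin n → F)) : Prop :=
  ∃ k d r : ℕ, Nat.card Cset = Fintype.card F ^ k ∧ minDistIs Cset d ∧
    minLocalityIs Cset r ∧ (d : ℤ) = (n : ℤ) - (k : ℤ) - (nceil k r : ℤ) + 2


section AuxLRC
set_option linter.unusedSectionVars false
set_option linter.unusedVariables false

noncomputable def polyOf {n : ℕ} (c : Fin n → F) : F[X] :=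
  ∑ j : Fin n, Polynomial.C (c j) * X ^ (j : ℕ)

def Dset (n : ℕ) (g : F[X]) : Set (Fin n → F) := {c | g ∣ polyOf c}

lemma coeff_polyOf {n : ℕ} (c : Fin n → F) (j : Fin n) : (polyOf c).coeff (j : ℕ) = c j := by
  classical
  rw [polyOf, finset_sum_coeff]
  rw [Finset.sum_eq_single j]
  · simp
  · intro i _ hij
    simp [coeff_C_mul, coeff_X_pow, Fin.val_eq_val,
      (by simpa [eq_comm, Fin.val_eq_val] using hij : ¬ (j:ℕ) = (i:ℕ))]
  · simp

lemma degree_polyOf_lt {n : ℕ} (hn : 0 < n) (c : Fin n → F) : (polyOf c).degree < (n : ℕ) := by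
  apply lt_of_le_of_lt (degree_sum_le _ _)
  rw [Finset.sup_lt_iff (by exact_mod_cast WithBot.bot_lt_coe n)]
  intro j _
  exact lt_of_le_of_lt (degree_C_mul_X_pow_le _ _) (by exact_mod_cast j.2)

lemma natDegree_polyOf_lt {n : ℕ} (hn : 0 < n) (c : Fin n → F) : (polyOf c).natDegree < n := by
  by_cases h : polyOf c = 0
  · simpa [h] using hn
  · exact natDegree_lt_iff_degree_lt h |>.2 (degree_polyOf_lt hn c)

lemma polyOf_coeffVec {n : ℕ} (f : F[X]) (hf : f.natDegree < n) :
    polyOf (fun j : Fin n => f.coeff (j : ℕ)) = f := by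
  rw [polyOf, Fin.sum_univ_eq_sum_range (fun j => Polynomial.C (f.coeff j) * X ^ j)]
  conv_rhs => rw [f.as_sum_range' n hf]
  simp [C_mul_X_pow_eq_monomial]

lemma polyOf_zero {n : ℕ} : polyOf (0 : Fin n → F) = 0 := by simp [polyOf]

lemma zero_mem_Dset {n : ℕ} (g : F[X]) : (0 : Fin n → F) ∈ Dset n g := by
  simp [Dset, polyOf_zero]

noncomputable def binomVec (n b : ℕ) (μ : F) (t : ℕ) : Fin n → F :=
  fun j => if (j : ℕ) = b * t then 1 else if (j : ℕ) = 0 then -μ ^ t else 0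

lemma polyOf_binomVec {n b t : ℕ} (μ : F) (hbt : 0 < b * t) (h : b * t < n) :
    polyOf (binomVec n b μ t) = X ^ (b * t) - C (μ ^ t) := by
  classical
  have h0 : (0 : ℕ) < n := lt_trans hbt h
  obtain ⟨hb0, ht0⟩ := mul_ne_zero_iff.mp hbt.ne'
  have hne : (⟨0, h0⟩ : Fin n) ≠ ⟨b * t, h⟩ := Fin.ne_of_val_ne (by simpa using hbt.ne)
  rw [polyOf, ← Finset.sum_subset (Finset.subset_univ ({⟨0, h0⟩, ⟨b*t, h⟩} : Finset (Fin n)))]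
  · rw [Finset.sum_pair hne]
    simp [binomVec, hb0, ht0, map_neg]
    ring
  · intro j _ hj
    simp only [Finset.mem_insert, Finset.mem_singleton] at hj
    push_neg at hj
    have h1 : (j : ℕ) ≠ 0 := fun hv => hj.1 (Fin.ext hv)
    have h2 : (j : ℕ) ≠ b * t := fun hv => hj.2 (Fin.ext hv)
    simp [binomVec, h1, h2]

lemma binomVec_mem {n b t : ℕ} (μ : F) (hbt : 0 < b * t) (h : b * t < n) :
    binomVec n b μ t ∈ Dset n (X ^ b - C μ) := by
  rw [Dset, Set.mem_setOf_eq, polyOf_binomVec μ hbt h, pow_mul, map_pow]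
  exact sub_dvd_pow_sub_pow _ _ t

lemma hammingNorm_binomVec {n b t : ℕ} (μ : F) (hμ : μ ≠ 0) (hbt : 0 < b * t) (h : b * t < n) :
    hammingNorm (binomVec n b μ t) = 2 := by
  classical
  have h0 : (0 : ℕ) < n := lt_trans hbt h
  obtain ⟨hb0, ht0⟩ := mul_ne_zero_iff.mp hbt.ne'
  have : ({i | binomVec n b μ t i ≠ 0} : Finset (Fin n)) = {⟨0, h0⟩, ⟨b*t, h⟩} := by
    ext j
    simp only [Finset.mem_filter, Finset.mem_univ, true_and, Finset.mem_insert,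
      Finset.mem_singleton, binomVec]
    constructor
    · intro hj
      by_cases h1 : (j : ℕ) = b * t
      · exact Or.inr (Fin.ext h1)
      by_cases h2 : (j : ℕ) = 0
      · exact Or.inl (Fin.ext h2)
      · exact absurd (Finset.mem_filter.mp hj).2 (by simp [h1, h2])
    · rintro (rfl | rfl) <;> exact Finset.mem_filter.mpr ⟨Finset.mem_univ _, by simp [hb0, ht0, hμ, pow_ne_zero]⟩
  rw [hammingNorm, this, Finset.card_pair (Fin.ne_of_val_ne (by simpa using hbt.ne))]

lemma binomVec_ne_zero {n b t : ℕ} (μ : F) (h : b * t < n) : binomVec n b μ t ≠ 0 := by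
  intro hc
  have := congrFun hc ⟨b*t, h⟩
  simp [binomVec] at this

lemma binomVec_def {n b t : ℕ} (μ : F) : ∀ j : Fin n, binomVec n b μ t j
    = if (j : ℕ) = b * t then 1 else if (j : ℕ) = 0 then -μ ^ t else 0 := fun _ => rfl

lemma no_weight_one {n b : ℕ} (hb : 0 < b) {μ : F} (hμ : μ ≠ 0) {c : Fin n → F}
    (hc : c ∈ Dset n (X ^ b - C μ)) (h1 : hammingNorm c = 1) : False := by
  classical
  obtain ⟨i, hi⟩ := Finset.card_eq_one.mp h1
  have hci : c i ≠ 0 := by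
    have : i ∈ ({j | c j ≠ 0} : Finset (Fin n)) := hi ▸ Finset.mem_singleton_self i
    simpa using this
  have hcj : ∀ j : Fin n, j ≠ i → c j = 0 := by
    intro j hj
    by_contra hcj
    have : j ∈ ({j | c j ≠ 0} : Finset (Fin n)) := by simpa using hcj
    rw [hi] at this
    exact hj (Finset.mem_singleton.mp this)
  have hpoly : polyOf c = C (c i) * X ^ (i : ℕ) := by
    rw [polyOf, Finset.sum_eq_single i]
    · intro j _ hj
      simp [hcj j hj]
    · simp
  have hdvd : (X ^ b - C μ) ∣ X ^ (i : ℕ) := by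
    have h := hc
    rw [Dset, Set.mem_setOf_eq, hpoly] at h
    have := h.mul_left (C (c i)⁻¹)
    rwa [← mul_assoc, ← C_mul, inv_mul_cancel₀ hci, C_1, one_mul] at this
  obtain ⟨t, ht, u, hu⟩ := (dvd_prime_pow prime_X (i : ℕ)).mp hdvd
  have hg0 : ((X : F[X]) ^ b - C μ).coeff 0 = -μ := by
    simp only [coeff_sub, coeff_X_pow, if_neg (by omega : ¬ (0:ℕ) = b), coeff_C_zero, zero_sub]
  rcases Nat.eq_zero_or_pos t with rfl | htpos
  · have : IsUnit ((X : F[X]) ^ b - C μ) := IsUnit.of_mul_eq_one _ (by simpa using hu)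
    have hd : ((X : F[X]) ^ b - C μ).natDegree = 0 := natDegree_eq_zero_of_isUnit this
    rw [natDegree_X_pow_sub_C] at hd
    omega
  · have := congrArg (fun q => q.coeff 0) hu
    simp only [mul_coeff_zero, hg0, coeff_X_pow, htpos.ne'] at this
    obtain ⟨r, hr, hru⟩ := Polynomial.isUnit_iff.mp u.isUnit
    have hr0 : r ≠ 0 := hr.ne_zero
    rw [← hru] at this
    simp [if_neg (by omega : ¬ (0:ℕ) = t)] at this
    rcases this with h | h
    · exact hμ h
    · exact hr0 h

lemma minDist_Dset {n b : ℕ} (hb : 0 < b) (hbn : b < n) {μ : F} (hμ : μ ≠ 0) :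
    minDistIs (Dset n (X ^ b - C μ)) 2 := by
  constructor
  · exact ⟨binomVec n b μ 1, binomVec_mem μ (by omega) (by omega),
      binomVec_ne_zero μ (by omega), hammingNorm_binomVec μ hμ (by omega) (by omega)⟩
  · rintro w ⟨c, hc, hc0, rfl⟩
    rcases Nat.lt_or_ge (hammingNorm c) 2 with h | h
    · interval_cases hw : hammingNorm c
      · exact absurd (hammingNorm_eq_zero.mp hw) hc0
      · exact absurd hw (fun hw => no_weight_one hb hμ hc hw)
    · exact h

lemma key_sum {n b N : ℕ} (hn : n = N * b) (hb : 0 < b) {μ : F} {c : Fin n → F}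
    (hc : c ∈ Dset n (X ^ b - C μ)) (pos : Fin N → Fin n) {u : ℕ} (hu : u < b)
    (hpos : ∀ t : Fin N, (pos t : ℕ) = u + b * (t : ℕ)) :
    ∑ t : Fin N, μ ^ (t : ℕ) * c (pos t) = 0 := by
  classical
  subst hn
  have hposdef : ∀ t : Fin N, pos t = finProdFinEquiv (t, ⟨u, hu⟩) := by
    intro t
    apply Fin.ext
    rw [hpos t]
    simp [finProdFinEquiv]
  set g : F[X] := X ^ b - C μ with hg
  set a : Fin b → F := fun v => ∑ t : Fin N, μ ^ (t : ℕ) * c (finProdFinEquiv (t, v)) with ha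
  have hsplit : polyOf c = ∑ t : Fin N, ∑ v : Fin b,
      C (c (finProdFinEquiv (t, v))) * X ^ ((v : ℕ) + b * (t : ℕ)) := by
    rw [polyOf, ← Equiv.sum_comp finProdFinEquiv (fun j => C (c j) * X ^ (j : ℕ)),
      Fintype.sum_prod_type]
    apply Finset.sum_congr rfl; intro t _
    apply Finset.sum_congr rfl; intro v _
    simp [finProdFinEquiv]
  have hpa : polyOf a = ∑ t : Fin N, ∑ v : Fin b,
      C (μ ^ (t : ℕ) * c (finProdFinEquiv (t, v))) * X ^ (v : ℕ) := by
    rw [polyOf]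
    rw [Finset.sum_comm]
    apply Finset.sum_congr rfl; intro v _
    rw [← Finset.sum_mul, ← map_sum]
  have hdiff : g ∣ polyOf c - polyOf a := by
    rw [hsplit, hpa, ← Finset.sum_sub_distrib]
    apply Finset.dvd_sum; intro t _
    rw [← Finset.sum_sub_distrib]
    apply Finset.dvd_sum; intro v _
    have heq : C (c (finProdFinEquiv (t, v))) * X ^ ((v : ℕ) + b * (t : ℕ))
        - C (μ ^ (t : ℕ) * c (finProdFinEquiv (t, v))) * X ^ (v : ℕ)
        = (C (c (finProdFinEquiv (t, v))) * X ^ (v : ℕ)) * ((X ^ b) ^ (t:ℕ) - (C μ) ^ (t:ℕ)) := by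
      rw [pow_add, pow_mul, map_mul, map_pow]
      ring
    rw [heq]
    exact (sub_dvd_pow_sub_pow _ _ _).mul_left _
  have hdvda : g ∣ polyOf a := by
    have h2 := dvd_sub hc hdiff
    simpa using h2
  have ha0 : polyOf a = 0 := by
    refine Polynomial.eq_zero_of_dvd_of_degree_lt hdvda ?_
    rw [hg, degree_X_pow_sub_C hb]
    exact degree_polyOf_lt hb a
  have := coeff_polyOf a ⟨u, hu⟩
  rw [ha0] at this
  simp only [coeff_zero] at this
  simp_rw [hposdef]
  rw [ha] at this
  exact this.symm

lemma locality_upper {n b N : ℕ} (hn : n = N * b) (hb : 0 < b) {μ : F} (hμ : μ ≠ 0) :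
    hasAllSymbolLocality (Dset n (X ^ b - C μ)) (N - 1) := by
  classical
  intro i
  have hN : 0 < N := by
    rcases Nat.eq_zero_or_pos N with rfl | h
    · exact absurd i.2 (by simp [hn])
    · exact h
  set u : ℕ := (i : ℕ) % b with hu_def
  have hu : u < b := Nat.mod_lt _ hb
  have hdiv : (i : ℕ) / b < N := by
    rw [Nat.div_lt_iff_lt_mul hb]
    exact hn ▸ i.2
  set t0 : Fin N := ⟨(i : ℕ) / b, hdiv⟩ with ht0_def
  have hposval : ∀ t : Fin N, u + b * (t : ℕ) < n := by
    intro t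
    rw [hn]
    calc u + b * (t : ℕ) < b + b * (t : ℕ) := by omega
    _ = b * ((t : ℕ) + 1) := by ring
    _ ≤ b * N := Nat.mul_le_mul_left _ (by omega)
    _ = N * b := Nat.mul_comm _ _
  set pos : Fin N → Fin n := fun t => ⟨u + b * (t : ℕ), hposval t⟩ with hpos_def
  have hposinj : Function.Injective pos := by
    intro t t' h
    have h1 : u + b * (t : ℕ) = u + b * (t' : ℕ) := congrArg Fin.val h
    exact Fin.ext (Nat.eq_of_mul_eq_mul_left hb (show b * (t:ℕ) = b * (t':ℕ) by omega))
  have hpost0 : pos t0 = i := by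
    apply Fin.ext
    simp [hpos_def, ht0_def, hu_def, Nat.mod_add_div]
  refine ⟨(Finset.univ.erase t0).image pos, ?_, ?_, ?_⟩
  · intro hmem
    obtain ⟨t, ht, hpt⟩ := Finset.mem_image.mp hmem
    rw [← hpost0] at hpt
    exact (Finset.mem_erase.mp ht).1 (hposinj hpt)
  · calc ((Finset.univ.erase t0).image pos).card ≤ (Finset.univ.erase t0).card :=
        Finset.card_image_le
    _ = N - 1 := by rw [Finset.card_erase_of_mem (Finset.mem_univ _), Finset.card_univ, Fintype.card_fin]
  · refine ⟨fun v => -(μ ^ (t0 : ℕ))⁻¹ * ∑ t ∈ (Finset.univ.erase t0).attach,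
      μ ^ ((t : Fin N) : ℕ) * v ⟨pos t.1, Finset.mem_image_of_mem pos t.2⟩, ?_⟩
    intro c hc
    have hkey := key_sum hn hb hc pos hu (fun t => rfl)
    rw [← Finset.add_sum_erase _ (fun t : Fin N => μ ^ (t : ℕ) * c (pos t)) (Finset.mem_univ t0)] at hkey
    rw [hpost0] at hkey
    have hμt : μ ^ (t0 : ℕ) ≠ 0 := pow_ne_zero _ hμ
    show c i = -(μ ^ ((t0 : Fin N) : ℕ))⁻¹ * ∑ t ∈ (Finset.univ.erase t0).attach,
      μ ^ ((t.1 : Fin N) : ℕ) * c (pos t.1)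
    rw [Finset.sum_attach _ (fun t : Fin N => μ ^ (t : ℕ) * c (pos t))]
    have hS : ∑ t ∈ Finset.univ.erase t0, μ ^ (t : ℕ) * c (pos t) = -(μ ^ (t0 : ℕ) * c i) :=
      eq_neg_of_add_eq_zero_right hkey
    rw [hS, neg_mul_neg, ← mul_assoc, inv_mul_cancel₀ hμt, one_mul]

lemma locality_lower {n b N : ℕ} (hn : n = N * b) (hb : 0 < b) (hN : 2 ≤ N) {μ : F} (hμ : μ ≠ 0)
    (r' : ℕ) (h : hasAllSymbolLocality (Dset n (X ^ b - C μ)) r') : N - 1 ≤ r' := by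
  classical
  by_contra hcon
  push_neg at hcon
  have hn0 : 0 < n := by rw [hn]; positivity
  set i0 : Fin n := ⟨0, hn0⟩ with hi0
  obtain ⟨I, hi0I, hIcard, f, hf⟩ := h i0
  have hposval : ∀ t : Fin N, b * (t : ℕ) < n := by
    intro t
    rw [hn]
    calc b * (t : ℕ) < b * (t:ℕ) + b := by omega
    _ = b * ((t:ℕ)+1) := by ring
    _ ≤ b * N := Nat.mul_le_mul_left _ (by omega)
    _ = N * b := Nat.mul_comm _ _
  have hN0 : 0 < N := by omega
  set t00 : Fin N := ⟨0, hN0⟩ with ht00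
  set pos : Fin N → Fin n := fun t => ⟨b * (t : ℕ), hposval t⟩ with hpos
  have hposinj : Function.Injective pos := by
    intro t t' hh
    have h1 : b * (t : ℕ) = b * (t' : ℕ) := congrArg Fin.val hh
    exact Fin.ext (Nat.eq_of_mul_eq_mul_left hb h1)
  set T : Finset (Fin n) := (Finset.univ.erase t00).image pos with hT
  have hTcard : T.card = N - 1 := by
    rw [hT, Finset.card_image_of_injective _ hposinj,
      Finset.card_erase_of_mem (Finset.mem_univ _), Finset.card_univ, Fintype.card_fin]
  have : ¬ (T ⊆ I) := fun hsub => by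
    have := Finset.card_le_card hsub
    omega
  obtain ⟨j, hjT, hjI⟩ := Finset.not_subset.mp this
  obtain ⟨t1, ht1, hjpos⟩ := Finset.mem_image.mp hjT
  have ht1ne : (t1 : ℕ) ≠ 0 := fun hv => (Finset.mem_erase.mp ht1).1 (Fin.ext hv)
  have hbt1 : 0 < b * (t1 : ℕ) := Nat.mul_pos hb (Nat.pos_of_ne_zero ht1ne)
  set cw := binomVec n b μ (t1 : ℕ) with hcw
  have hcwmem : cw ∈ Dset n (X ^ b - C μ) := binomVec_mem μ hbt1 (hposval t1)
  have hcwI : ∀ x : {x : Fin n // x ∈ I}, cw x.1 = (0 : Fin n → F) x.1 := by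
    rintro ⟨x, hx⟩
    have hx0 : (x : ℕ) ≠ 0 := by
      intro hv
      exact hi0I (by rwa [show x = i0 from Fin.ext hv] at hx)
    have hxbt : (x : ℕ) ≠ b * (t1 : ℕ) := by
      intro hv
      have : x = j := by rw [← hjpos]; exact Fin.ext hv
      exact hjI (this ▸ hx)
    simp [hcw, binomVec_def, hx0, hxbt]
  have h1 := hf cw hcwmem
  have h2 := hf 0 (zero_mem_Dset _)
  have : cw i0 = (0 : Fin n → F) i0 := by
    rw [h1, h2]
    congr 1
    funext x
    exact hcwI x
  have hi0v : (i0 : ℕ) = 0 := rfl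
  rw [hcw, binomVec_def, hi0v, if_neg (by omega : ¬ (0:ℕ) = b * (t1:ℕ)), if_pos rfl] at this
  simp only [Pi.zero_apply, neg_eq_zero] at this
  exact pow_ne_zero _ hμ this

lemma card_Dset {n : ℕ} (g : F[X]) (hg : g.Monic) (hgn : g.natDegree < n) :
    Nat.card (Dset n g) = Fintype.card F ^ (n - g.natDegree) := by
  classical
  set d := g.natDegree with hd
  have hn : 0 < n := lt_of_le_of_lt (Nat.zero_le _) hgn
  set Φ : (Fin (n - d) → F) → (Dset n g) := fun h =>
    ⟨fun j => (g * polyOf h).coeff (j : ℕ), by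
      have hdeg : (g * polyOf h).natDegree < n := by
        by_cases h0 : polyOf h = 0
        · simpa [h0] using hn
        · rw [natDegree_mul hg.ne_zero h0]
          have := natDegree_polyOf_lt (by omega) h
          omega
      show g ∣ polyOf _
      rw [polyOf_coeffVec _ hdeg]
      exact Dvd.intro _ rfl⟩ with hΦ
  have hbij : Function.Bijective Φ := by
    constructor
    · intro h1 h2 heq
      have heq' : ∀ j : Fin n, (g * polyOf h1).coeff (j : ℕ) = (g * polyOf h2).coeff (j : ℕ) :=
        fun j => congrFun (congrArg Subtype.val heq) j
      have hdeg : ∀ h0 : Fin (n - d) → F, (g * polyOf h0).natDegree < n := by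
        intro h0
        by_cases hz : polyOf h0 = 0
        · simpa [hz] using hn
        · rw [natDegree_mul hg.ne_zero hz]
          have := natDegree_polyOf_lt (by omega) h0
          omega
      have hpoly : g * polyOf h1 = g * polyOf h2 := by
        rw [← polyOf_coeffVec (g * polyOf h1) (hdeg h1), ← polyOf_coeffVec (g * polyOf h2) (hdeg h2)]
        congr 1
        funext j
        exact heq' j
      have := mul_left_cancel₀ hg.ne_zero hpoly
      funext j
      rw [← coeff_polyOf h1 j, ← coeff_polyOf h2 j, this]
    · rintro ⟨c, hc⟩
      obtain ⟨q, hq⟩ := hc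
      have hcq : ∀ j : Fin n, c j = (g * q).coeff (j : ℕ) := by
        intro j
        rw [← hq, coeff_polyOf]
      have hqdeg : q = 0 ∨ q.natDegree < n - d := by
        by_cases hz : q = 0
        · exact Or.inl hz
        · right
          have h1 : (polyOf c).natDegree < n := natDegree_polyOf_lt hn c
          rw [hq, natDegree_mul hg.ne_zero hz] at h1
          omega
      refine ⟨fun j => q.coeff (j : ℕ), ?_⟩
      have hpq : polyOf (fun j : Fin (n - d) => q.coeff (j : ℕ)) = q := by
        rcases hqdeg with hz | hlt
        · simp only [hz, coeff_zero]
          exact polyOf_zero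
        · exact polyOf_coeffVec q hlt
      apply Subtype.ext
      funext j
      show (g * polyOf _).coeff (j : ℕ) = c j
      rw [hpq, hcq j]
  have hcongr := Nat.card_congr (Equiv.ofBijective Φ hbij)
  rw [Nat.card_eq_fintype_card, Fintype.card_fun, Fintype.card_fin] at hcongr
  rw [← hcongr]

lemma charP_of_card {p m : ℕ} (hp : p.Prime) (hm : 1 ≤ m) (hcard : Fintype.card F = p ^ m) :
    CharP F p := by
  have h1 : CharP F (ringChar F) := ringChar.charP F
  obtain ⟨k, hprime, hk⟩ := FiniteField.card F (ringChar F)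
  rw [hcard] at hk
  have hdvd : p ∣ ringChar F ^ (k : ℕ) := hk ▸ dvd_pow_self p (by omega)
  have : p = ringChar F := (Nat.prime_dvd_prime_iff_eq hp hprime).mp (hp.dvd_of_dvd_pow hdvd)
  rw [this]; exact h1

lemma Ci_eq {p : ℕ} (hp : p.Prime) [CharP F p] {η s i : ℕ} (hi : i ≤ p ^ s) (lam0 : F) :
    Ci p η s i lam0 = Dset (η * p ^ s) ((X ^ η - C lam0) ^ i) := by
  haveI : Fact p.Prime := ⟨hp⟩
  haveI : CharP F[X] p := charP_of_injective_algebraMap' F p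
  ext c
  show _ ∈ Ideal.span _ ↔ _
  have hXn : ((X : F[X]) ^ η - C lam0) ^ p ^ s = X ^ (η * p ^ s) - C (lam0 ^ p ^ s) := by
    rw [sub_pow_char_pow, ← pow_mul, ← map_pow]
  have hdvd : ((X : F[X]) ^ η - C lam0) ^ i ∣ (X : F[X]) ^ (η * p ^ s) - C (lam0 ^ p ^ s) := by
    rw [← hXn]; exact pow_dvd_pow _ hi
  rw [show ({((X : F[X]) ^ η - C lam0) ^ i, (X : F[X]) ^ (η * p ^ s) - C (lam0 ^ p ^ s)} : Set F[X])
      = insert ((X : F[X]) ^ (η * p ^ s) - C (lam0 ^ p ^ s)) {((X : F[X]) ^ η - C lam0) ^ i}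
    from Set.pair_comm _ _]
  have hmem : (X : F[X]) ^ (η * p ^ s) - C (lam0 ^ p ^ s)
      ∈ Ideal.span ({((X : F[X]) ^ η - C lam0) ^ i} : Set F[X]) :=
    Ideal.mem_span_singleton.mpr hdvd
  rw [show Ideal.span (insert ((X : F[X]) ^ (η * p ^ s) - C (lam0 ^ p ^ s))
      {((X : F[X]) ^ η - C lam0) ^ i}) = Ideal.span {((X : F[X]) ^ η - C lam0) ^ i}
    from Submodule.span_insert_eq_span hmem]
  exact Ideal.mem_span_singleton

end AuxLRC

/-- For prime `p`, `s ≥ 2`, `η` coprime to `p` and `0 ≤ ℓ ≤ s − 1`, the code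
`C_{p^{s−ℓ−1}}(η, p^s, λ₀)` has length `η p^s`, dimension `η(p^s − p^{s−ℓ−1})`, minimum
distance `2` and minimum locality `p^{ℓ+1} − 1`; in particular it is an optimal LRC. -/
theorem stmt5 {p m : ℕ} (hp : p.Prime) (hm : 1 ≤ m)
    {F : Type} [Field F] [Fintype F] [DecidableEq F] (hcard : Fintype.card F = p ^ m)
    (s : ℕ) (hs : 2 ≤ s) (η : ℕ) (hη : 0 < η) (hcop : Nat.Coprime η p)
    (ℓ : ℕ) (hℓ : ℓ ≤ s - 1) (lam0 : F) (hlam0 : lam0 ≠ 0) :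
    Nat.card (Ci p η s (p ^ (s - ℓ - 1)) lam0)
        = (p ^ m) ^ (η * (p ^ s - p ^ (s - ℓ - 1))) ∧
    minDistIs (Ci p η s (p ^ (s - ℓ - 1)) lam0) 2 ∧
    minLocalityIs (Ci p η s (p ^ (s - ℓ - 1)) lam0) (p ^ (ℓ + 1) - 1) ∧
    (2 : ℤ) = ((η * p ^ s : ℕ) : ℤ) - ((η * (p ^ s - p ^ (s - ℓ - 1)) : ℕ) : ℤ)
      - (nceil (η * (p ^ s - p ^ (s - ℓ - 1))) (p ^ (ℓ + 1) - 1) : ℤ) + 2 := by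
  haveI hchar : CharP F p := charP_of_card hp hm hcard
  haveI : Fact p.Prime := ⟨hp⟩
  have hp2 : 2 ≤ p := hp.two_le
  set a := s - ℓ - 1 with ha
  have hsa : s = a + (ℓ + 1) := by omega
  set b := η * p ^ a with hb_def
  set N := p ^ (ℓ + 1) with hN_def
  have hb : 0 < b := Nat.mul_pos hη (pow_pos (by omega) a)
  have hN2 : 2 ≤ N := by
    calc 2 ≤ p := hp2
    _ = p ^ 1 := (pow_one p).symm
    _ ≤ p ^ (ℓ + 1) := Nat.pow_le_pow_right (by omega) (by omega)
  have hn : η * p ^ s = N * b := by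
    rw [hsa, pow_add]; ring
  have hile : p ^ a ≤ p ^ s := Nat.pow_le_pow_right (by omega) (by omega)
  set μ : F := lam0 ^ p ^ a with hμ_def
  have hμ : μ ≠ 0 := pow_ne_zero _ hlam0
  have hgeq : ((X : F[X]) ^ η - C lam0) ^ p ^ a = X ^ b - C μ := by
    haveI : CharP F[X] p := charP_of_injective_algebraMap' F p
    rw [sub_pow_char_pow, ← pow_mul, ← map_pow]
  have hCi : Ci p η s (p ^ a) lam0 = Dset (η * p ^ s) (X ^ b - C μ) := by
    rw [Ci_eq hp hile lam0, hgeq]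
  have hbn : b < η * p ^ s := by
    rw [hn]
    calc b = 1 * b := (one_mul b).symm
    _ < N * b := (Nat.mul_lt_mul_right hb).mpr (by omega)
  have hkdim : η * (p ^ s - p ^ a) = η * p ^ s - b := by
    rw [hb_def, Nat.mul_sub]
  have hkb : η * (p ^ s - p ^ a) = b * (N - 1) := by
    rw [hkdim, hn]
    calc N * b - b = b * N - b * 1 := by rw [Nat.mul_comm, Nat.mul_one]
    _ = b * (N - 1) := (Nat.mul_sub b N 1).symm
  refine ⟨?_, ?_, ?_, ?_⟩
  · have hmon : ((X : F[X]) ^ b - C μ).Monic := monic_X_pow_sub_C μ (by omega)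
    have hdeg : ((X : F[X]) ^ b - C μ).natDegree = b := natDegree_X_pow_sub_C
    rw [hkdim, hCi, card_Dset _ hmon (by rw [hdeg]; exact hbn), hdeg, hcard]
  · rw [hCi]
    exact minDist_Dset hb hbn hμ
  · constructor
    · rw [hCi]
      exact locality_upper hn hb hμ
    · intro r' hr'
      rw [Set.mem_setOf_eq, hCi] at hr'
      exact locality_lower hn hb hN2 hμ r' hr'
  · have hceil : nceil (η * (p ^ s - p ^ a)) (N - 1) = b := by
      rw [hkb, nceil]
      have h2 : b * (N - 1) + (N - 1) - 1 = (N - 1 - 1) + b * (N - 1) := by omega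
      rw [h2, Nat.add_mul_div_right _ _ (by omega : 0 < N - 1),
        Nat.div_eq_of_lt (by omega), Nat.zero_add]
    rw [hceil]
    have hble : b ≤ η * p ^ s := le_of_lt hbn
    have key : η * (p ^ s - p ^ a) + b = η * p ^ s := by omega
    omega
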